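/- Let x ∈ s with G(x) > 0, let v* ∈ s be a minimizer over s of v ↦ ⟨∇f(x), v⟩ + g(v), set d := v* − x (note d ≠ 0), and let L₀ > 0. For each i ∈ ℕ define L^{(i)} := 2^{i−1} L₀ and τ^{(i)} := min{1, G(x)/(2 L^{(i)} ‖d‖²)}. Then there exists N ∈ ℕ such that for all integers i ≥ N, F(x + τ^{(i)} d) ≤ F(x) − (1/2) τ^{(i)} G(x) + (1/2) L^{(i)} (τ^{(i)})² ‖d‖²; in particular, the backtracking linesearch of the parameter-free generalized conditional gradient method terminates in a finite number of steps. -/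

import Mathlib

/-!
At a minimizer `v*` of the linearized problem the Frank–Wolfe gap is attained, so the directional
derivative of `f + g` along `d = v* − x` (with `g` bounded by its chord) is at most `−G(x) < 0`.
Hence `f + g` decreases by at least `τ G(x) / 2` for all small enough steps `τ > 0`, and the
candidate steps `τ^{(i)}` tend to `0⁺` because `L^{(i)} → ∞`; the quadratic term is nonnegative.
-/

open scoped RealInnerProductSpace

/-- The Frank–Wolfe gap `G(x) = sup_{v ∈ s} (⟪∇f(x), x − v⟫ + g(x) − g(v))`. -/
noncomputable def FWgap {E : Type*} [NormedAddCommGroup E] [InnerProductSpace ℝ E] [CompleteSpace E]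
    (f g : E → ℝ) (s : Set E) (x : E) : ℝ :=
  ⨆ v : s, (⟪gradient f x, x - (v : E)⟫ + g x - g (v : E))


/-- Candidate Lipschitz estimate `L^{(i)} = 2^{i−1} · L_prev`. -/
noncomputable def Lcand (Lprev : ℝ) (i : ℕ) : ℝ := 2 ^ i * Lprev / 2

/-- Candidate stepsize `τ^{(i)} = min {1, G / (2 L^{(i)} ‖d‖²)}`. -/
noncomputable def tauCand (Gx Lprev nd2 : ℝ) (i : ℕ) : ℝ :=
  min 1 (Gx / (2 * Lcand Lprev i * nd2))

open Filter Topology Set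

section

variable {E : Type*} [NormedAddCommGroup E] [InnerProductSpace ℝ E]

theorem FWgap_eq_of_isMinOn [CompleteSpace E] {f g : E → ℝ} {s : Set E} {x vstar : E}
    (hvstar : vstar ∈ s) (hmin : IsMinOn (fun w => ⟪gradient f x, w⟫ + g w) s vstar) :
    FWgap f g s x = ⟪gradient f x, x - vstar⟫ + g x - g vstar := by
  have hle : ∀ v : s, ⟪gradient f x, x - (v : E)⟫ + g x - g (v : E)
      ≤ ⟪gradient f x, x - vstar⟫ + g x - g vstar := by
    intro v
    have h := isMinOn_iff.1 hmin v v.2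
    simp only [inner_sub_right] at h ⊢
    linarith
  have : Nonempty s := ⟨⟨vstar, hvstar⟩⟩
  exact le_antisymm (ciSup_le hle)
    (le_ciSup ⟨_, by rintro y ⟨v, rfl⟩; exact hle v⟩ (⟨vstar, hvstar⟩ : s))

theorem eventually_lt_add_mul_of_hasDerivAt {φ : ℝ → ℝ} {c r a : ℝ} (hφ : HasDerivAt φ c a)
    (hr : c < r) : ∀ᶠ t in 𝓝[>] a, φ t < φ a + (t - a) * r := by
  filter_upwards [hφ.hasDerivWithinAt.limsup_slope_le' (lt_irrefl a) hr, self_mem_nhdsWithin]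
    with t hslope (ht : a < t)
  rw [slope_def_field, div_lt_iff₀ (sub_pos.2 ht)] at hslope
  linarith

theorem eventually_add_le_of_convexOn [CompleteSpace E] {s : Set E} {f g : E → ℝ} {x v : E}
    {r : ℝ}
    (hg : ConvexOn ℝ s g) (hx : x ∈ s) (hv : v ∈ s) (hf : DifferentiableAt ℝ f x)
    (hr : ⟪gradient f x, v - x⟫ + g v - g x < r) :
    ∀ᶠ τ in 𝓝[>] (0 : ℝ), f (x + τ • (v - x)) + g (x + τ • (v - x)) ≤ f x + g x + τ * r := by
  have hpath : HasDerivAt (fun τ : ℝ => x + τ • (v - x)) (v - x) 0 := by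
    simpa using ((hasDerivAt_id (0 : ℝ)).smul_const (v - x)).const_add x
  have hf' : HasFDerivAt f (InnerProductSpace.toDual ℝ E (gradient f x))
      (x + (0 : ℝ) • (v - x)) := by
    simpa using hf.hasGradientAt.hasFDerivAt
  have hline : HasDerivAt (fun τ : ℝ => f (x + τ • (v - x))) ⟪gradient f x, v - x⟫ 0 := by
    have h := hf'.comp_hasDerivAt 0 hpath
    rwa [InnerProductSpace.toDual_apply_apply] at h
  have hτ_lt_one : ∀ᶠ τ in 𝓝[>] (0 : ℝ), τ < 1 :=
    nhdsWithin_le_nhds (eventually_lt_nhds one_pos)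
  filter_upwards [eventually_lt_add_mul_of_hasDerivAt hline (r := r - (g v - g x)) (by linarith),
    self_mem_nhdsWithin, hτ_lt_one] with τ hfτ (hτ : 0 < τ) hτ1
  have hchord : g (x + τ • (v - x)) ≤ (1 - τ) * g x + τ * g v := by
    have hseg : x + τ • (v - x) = (1 - τ) • x + τ • v := by
      rw [smul_sub, sub_smul, one_smul]; abel
    rw [hseg]
    exact hg.2 hx hv (by linarith) hτ.le (by ring)
  simp only [zero_smul, add_zero, sub_zero] at hfτ
  nlinarith

end

theorem Lcand_pos {L₀ : ℝ} (hL₀ : 0 < L₀) (i : ℕ) : 0 < Lcand L₀ i := by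
  unfold Lcand; positivity

theorem tendsto_tauCand_nhdsGT_zero {G L₀ nd2 : ℝ} (hG : 0 < G) (hL₀ : 0 < L₀) (hnd2 : 0 < nd2) :
    Tendsto (tauCand G L₀ nd2) atTop (𝓝[>] 0) := by
  have hden : Tendsto (fun i : ℕ => 2 * Lcand L₀ i * nd2) atTop atTop := by
    have h := (tendsto_pow_atTop_atTop_of_one_lt (one_lt_two (α := ℝ))).atTop_mul_const
      (mul_pos hL₀ hnd2)
    refine h.congr fun i => ?_
    unfold Lcand; ring
  have hfrac := tendsto_const_nhds (x := G).div_atTop hden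
  unfold tauCand
  refine tendsto_nhdsWithin_iff.2 ⟨?_, Eventually.of_forall fun i => ?_⟩
  · simpa using (tendsto_const_nhds (x := (1 : ℝ))).min hfrac
  · have := Lcand_pos hL₀ i
    exact mem_Ioi.2 (lt_min zero_lt_one (by positivity))

theorem parameter_free_linesearch_terminates_general
    {E : Type*} [NormedAddCommGroup E] [InnerProductSpace ℝ E] [FiniteDimensional ℝ E]
    (s : Set E)
    (g : E → ℝ) (hg_cv : ConvexOn ℝ s g)
    (f : E → ℝ) (hf : ∃ u : Set E, IsOpen u ∧ s ⊆ u ∧ ContDiffOn ℝ 1 f u)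
    (x : E) (hx : x ∈ s) (hGpos : 0 < FWgap f g s x)
    (vstar : E) (hvstar : vstar ∈ s)
    (hmin : ∀ w ∈ s, ⟪gradient f x, vstar⟫ + g vstar ≤ ⟪gradient f x, w⟫ + g w)
    (d : E) (hd : d = vstar - x)
    (L₀ : ℝ) (hL₀ : 0 < L₀) :
    ∃ N : ℕ, ∀ i : ℕ, N ≤ i →
      f (x + tauCand (FWgap f g s x) L₀ (‖d‖ ^ 2) i • d)
        + g (x + tauCand (FWgap f g s x) L₀ (‖d‖ ^ 2) i • d)
      ≤ (f x + g x) - (1 / 2) * tauCand (FWgap f g s x) L₀ (‖d‖ ^ 2) i * FWgap f g s x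
        + (1 / 2) * Lcand L₀ i * (tauCand (FWgap f g s x) L₀ (‖d‖ ^ 2) i) ^ 2 * ‖d‖ ^ 2 := by
  subst hd
  obtain ⟨u, hu, hsu, hfu⟩ := hf
  have hfx : DifferentiableAt ℝ f x :=
    (hfu.contDiffAt (hu.mem_nhds (hsu hx))).differentiableAt one_ne_zero
  have hgap := FWgap_eq_of_isMinOn (f := f) (g := g) hvstar (isMinOn_iff.2 hmin)
  have hslope : ⟪gradient f x, vstar - x⟫ + g vstar - g x = -FWgap f g s x := by
    rw [hgap, ← neg_sub vstar x, inner_neg_right]; ring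
  have hd0 : vstar - x ≠ 0 := by
    rintro hzero
    rw [sub_eq_zero.1 hzero] at hgap
    simp [hgap] at hGpos
  have hdesc := eventually_add_le_of_convexOn (r := -(FWgap f g s x / 2)) hg_cv hx hvstar hfx
    (by linarith)
  obtain ⟨N, hN⟩ := eventually_atTop.1 <|
    (tendsto_tauCand_nhdsGT_zero hGpos hL₀ (pow_pos (norm_pos_iff.2 hd0) 2)).eventually hdesc
  refine ⟨N, fun i hi => ?_⟩
  have hquad : 0 ≤ Lcand L₀ i * tauCand (FWgap f g s x) L₀ (‖vstar - x‖ ^ 2) i ^ 2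
      * ‖vstar - x‖ ^ 2 := by
    have := Lcand_pos hL₀ i; positivity
  linarith [hN i hi]

/-- **Lemma: well-definedness of the linesearch in Algorithm 2.**
Let `x ∈ s` with `G(x) > 0`, let `v* ∈ s` minimize `v ↦ ⟪∇f(x), v⟫ + g v` over `s`,
set `d := v* − x`, and let `L₀ > 0`. With `L^{(i)} = 2^{i−1} L₀` and
`τ^{(i)} = min {1, G(x)/(2 L^{(i)} ‖d‖²)}`, there exists `N` such that for all `i ≥ N`,
`F(x + τ^{(i)} d) ≤ F(x) − (1/2) τ^{(i)} G(x) + (1/2) L^{(i)} (τ^{(i)})² ‖d‖²`. -/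
theorem parameter_free_linesearch_terminates
    {E : Type*} [NormedAddCommGroup E] [InnerProductSpace ℝ E] [FiniteDimensional ℝ E]
    (s : Set E) (hs_ne : s.Nonempty) (hs_cl : IsClosed s) (hs_cv : Convex ℝ s)
    (g : E → ℝ) (hg_cv : ConvexOn ℝ s g) (hg_lsc : LowerSemicontinuousOn g s)
    (hg_sc : ∀ M : ℝ, ∃ R : ℝ, ∀ z ∈ s, R ≤ ‖z‖ → M ≤ g z / ‖z‖)
    (f : E → ℝ) (hf : ∃ u : Set E, IsOpen u ∧ s ⊆ u ∧ ContDiffOn ℝ 1 f u)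
    (hF_bdd : BddBelow ((fun z => f z + g z) '' s))
    (x : E) (hx : x ∈ s) (hGpos : 0 < FWgap f g s x)
    (vstar : E) (hvstar : vstar ∈ s)
    (hmin : ∀ w ∈ s, ⟪gradient f x, vstar⟫ + g vstar ≤ ⟪gradient f x, w⟫ + g w)
    (d : E) (hd : d = vstar - x)
    (L₀ : ℝ) (hL₀ : 0 < L₀) :
    ∃ N : ℕ, ∀ i : ℕ, N ≤ i →
      f (x + tauCand (FWgap f g s x) L₀ (‖d‖ ^ 2) i • d)
        + g (x + tauCand (FWgap f g s x) L₀ (‖d‖ ^ 2) i • d)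
      ≤ (f x + g x) - (1 / 2) * tauCand (FWgap f g s x) L₀ (‖d‖ ^ 2) i * FWgap f g s x
        + (1 / 2) * Lcand L₀ i * (tauCand (FWgap f g s x) L₀ (‖d‖ ^ 2) i) ^ 2 * ‖d‖ ^ 2 :=
  parameter_free_linesearch_terminates_general s g hg_cv f hf x hx hGpos vstar hvstar hmin d hd L₀
    hL₀
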